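/- For a finite non-abelian group G, the commuting probability cp₂(G) is at most 5/8. -/
import Mathlib

theorem commuting_probability_le_five_eighths
    (G : Type*) [Group G] [Fintype G] (h : ¬ ∀ x y : G, x * y = y * x) :
    (Nat.card {p : G × G // p.1 * p.2 = p.2 * p.1} : ℚ) / (Nat.card G : ℚ) ^ 2 ≤ 5 / 8 := by
  classical
  -- the center quotient is not cyclic
  have hnotcyc : ¬ IsCyclic (G ⧸ Subgroup.center G) := by
    intro hc
    exact h (commutative_of_cyclic_center_quotient (QuotientGroup.mk' (Subgroup.center G))
      (by simp [QuotientGroup.ker_mk']))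
  set n := Nat.card G with hn
  set z := Nat.card (Subgroup.center G) with hz
  set k := Nat.card (ConjClasses G) with hk
  have hnpos : 0 < n := Nat.card_pos
  -- 4 * z ≤ n
  have hindex : z * (Subgroup.center G).index = n := (Subgroup.center G).card_mul_index
  have hidx4 : 4 ≤ (Subgroup.center G).index := by
    by_contra hlt
    push_neg at hlt
    have hcard : Nat.card (G ⧸ Subgroup.center G) = (Subgroup.center G).index := rfl
    interval_cases hI : (Subgroup.center G).index
    · simp only [Nat.mul_zero] at hindex; omega
    · refine hnotcyc ?_
      have : Subsingleton (G ⧸ Subgroup.center G) :=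
        Nat.card_eq_one_iff_unique.mp hcard |>.1
      infer_instance
    · exact hnotcyc (isCyclic_of_prime_card (p := 2) hcard)
    · exact hnotcyc (isCyclic_of_prime_card (p := 3) hcard)
  have h4z : 4 * z ≤ n := by
    calc 4 * z ≤ (Subgroup.center G).index * z := Nat.mul_le_mul_right _ hidx4
    _ = n := by rw [mul_comm]; exact hindex
  -- 2 * k ≤ n + z  via the class equation
  have h2k : 2 * k ≤ n + z := by
    have hce := Group.card_center_add_sum_card_noncenter_eq_card G
    set t := (ConjClasses.noncenter G).toFinset with ht
    -- each noncentral class has size ≥ 2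
    have hterm : ∀ x ∈ t, 2 ≤ x.carrier.toFinset.card := by
      intro x hx
      have hx' : x.carrier.Nontrivial := by
        rw [ht, Set.mem_toFinset] at hx
        exact (ConjClasses.mem_noncenter x).mp hx
      obtain ⟨a, ha, b, hb, hab⟩ := hx'
      exact Finset.one_lt_card.mpr ⟨a, Set.mem_toFinset.mpr ha, b, Set.mem_toFinset.mpr hb, hab⟩
    have hsum : 2 * t.card ≤ ∑ x ∈ t, x.carrier.toFinset.card := by
      calc 2 * t.card = ∑ _x ∈ t, 2 := by rw [Finset.sum_const, smul_eq_mul, mul_comm]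
      _ ≤ _ := Finset.sum_le_sum hterm
    -- k = z + t.card
    have hkeq : k = z + t.card := by
      have hcompl : Fintype.card (Subgroup.center G) =
          Fintype.card ((ConjClasses.noncenter G)ᶜ : Set (ConjClasses G)) :=
        Fintype.card_congr ((ConjClasses.mk_bijOn G).equiv _)
      have hA : Fintype.card ((ConjClasses.noncenter G)ᶜ : Set (ConjClasses G)) =
          Fintype.card (ConjClasses G) - Fintype.card (ConjClasses.noncenter G) :=
        Fintype.card_compl_set _
      have hB : Fintype.card (ConjClasses.noncenter G) ≤ Fintype.card (ConjClasses G) :=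
        Fintype.card_subtype_le _
      have htc : t.card = Fintype.card (ConjClasses.noncenter G) := by
        rw [ht, Set.toFinset_card]
      rw [hk, hz, Nat.card_eq_fintype_card, Nat.card_eq_fintype_card]
      omega
    have hzn : z + ∑ x ∈ t, x.carrier.toFinset.card = n := by
      rw [hz, hn, Nat.card_eq_fintype_card, Nat.card_eq_fintype_card]
      exact hce
    omega
  have h8k : 8 * k ≤ 5 * n := by omega
  -- conclude
  have hcomm : Nat.card {p : G × G // p.1 * p.2 = p.2 * p.1} = k * n :=
    card_comm_eq_card_conjClasses_mul_card G
  rw [hcomm]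
  rw [div_le_div_iff₀ (by positivity) (by norm_num)]
  have hcast : (8 : ℚ) * k ≤ 5 * n := by exact_mod_cast h8k
  have hnQ : (0 : ℚ) ≤ n := by positivity
  push_cast
  nlinarith [mul_le_mul_of_nonneg_right hcast hnQ]
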